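/- arXiv:1903.10455 — 2 statements merged into one kernel-verified Lean document; each statement's English description precedes it below -/
import Mathlib

section
/- Let μ be a Borel probability measure on [0,1] and A a positive definite n×n complex matrix. Then the Fréchet derivative of the map X ↦ φ_μ(A,X), defined on positive definite matrices, vanishes at X = A; that is, D(φ_μ(A,·))(A)[Y] = 0 for every Hermitian matrix Y. -/
open MeasureTheory Matrix
open scoped ComplexOrder

/-- `f_μ(x) = ∫_{[0,1]} x / ((1-λ)x + λ) dμ(λ)`. -/
noncomputable def fmu (μ : Measure ℝ) (x : ℝ) : ℝ := ∫ l, x / ((1 - l) * x + l) ∂μ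

/-- The center of mass `c(μ) = ∫_{[0,1]} λ dμ(λ)`. -/
noncomputable def cmu (μ : Measure ℝ) : ℝ := ∫ l, l ∂μ

/-- The positive square root of a positive definite matrix, via functional calculus. -/
noncomputable def matSqrt {n : ℕ} (A : Matrix (Fin n) (Fin n) ℂ) : Matrix (Fin n) (Fin n) ℂ :=
  cfc Real.sqrt A

/-- The Kubo–Ando mean `A σ_μ B = A^{1/2} f_μ(A^{-1/2} B A^{-1/2}) A^{1/2}`. -/
noncomputable def kuboAndo {n : ℕ} (μ : Measure ℝ) (A B : Matrix (Fin n) (Fin n) ℂ) :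
    Matrix (Fin n) (Fin n) ℂ :=
  matSqrt A * cfc (fmu μ) ((matSqrt A)⁻¹ * B * (matSqrt A)⁻¹) * matSqrt A

/-- The generalized quantum Hellinger divergence
`φ_μ(A,B) = Tr((1-c(μ))A + c(μ)B - A σ_μ B)`. -/
noncomputable def qhd {n : ℕ} (μ : Measure ℝ) (A B : Matrix (Fin n) (Fin n) ℂ) : ℝ :=
  (((1 - cmu μ) • A + cmu μ • B - kuboAndo μ A B).trace).re

/-!
Conjugating by `A^{-1/2}` turns `A + tY` into `1 + tC` with `C = A^{-1/2} Y A^{-1/2}`, so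
`φ_μ(A, A + tY) = Tr A + t c(μ) Tr Y - Tr (A f_μ(1 + tC))`. Diagonalising `C = U diag(d) U*`, the
last trace is `∑ᵢ wᵢ f_μ(1 + t dᵢ)` with `wᵢ = (U* A U)ᵢᵢ`, whose derivative at `t = 0` is
`f_μ'(1) ∑ᵢ wᵢ dᵢ = f_μ'(1) Tr (A C) = f_μ'(1) Tr Y`. Differentiating under the integral sign gives
`f_μ'(1) = ∫ λ dμ(λ) = c(μ)`, and the two first-order terms cancel.
-/

section HermitianCFC

variable {𝕜 n : Type*} [RCLike 𝕜] [Fintype n] [DecidableEq n] {C : Matrix n n 𝕜}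

lemma Matrix.IsHermitian.trace_mul_cfc (hC : C.IsHermitian) (X : Matrix n n 𝕜) (g : ℝ → ℝ) :
    (X * cfc g C).trace = ∑ i, g (hC.eigenvalues i) •
      (star (hC.eigenvectorUnitary : Matrix n n 𝕜) * X * hC.eigenvectorUnitary) i i := by
  rw [hC.cfc_eq, IsHermitian.cfc, Unitary.conjStarAlgAut_apply, ← Matrix.mul_assoc,
    trace_mul_cycle, ← Matrix.mul_assoc]
  simp [trace, mul_diagonal, mul_comm, RCLike.real_smul_eq_coe_mul]

lemma Matrix.IsHermitian.cfc_one_add_smul (hC : C.IsHermitian) (f : ℝ → ℝ) (t : ℝ) :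
    cfc f (1 + t • C) = cfc (fun x => f (1 + t * x)) C := by
  have hsa : IsSelfAdjoint C := hC.isSelfAdjoint
  rw [cfc_comp' f (fun x => 1 + t * x) C
      (((finite_real_spectrum (A := C)).image _).continuousOn f),
    cfc_const_add 1 (fun x => t * x) C, cfc_const_mul_id t C, map_one]

theorem Matrix.IsHermitian.hasDerivAt_trace_mul_cfc_one_add_smul (hC : C.IsHermitian)
    (X : Matrix n n 𝕜) {f : ℝ → ℝ} {f' : ℝ} (hf : HasDerivAt f f' 1) :
    HasDerivAt (fun t : ℝ => (X * cfc f (1 + t • C)).trace) (f' • (X * C).trace) 0 := by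
  set w := fun i => (star (hC.eigenvectorUnitary : Matrix n n 𝕜) * X * hC.eigenvectorUnitary) i i
  have hsum : HasDerivAt (fun t : ℝ => ∑ i, f (1 + t * hC.eigenvalues i) • w i)
      (∑ i, (f' * hC.eigenvalues i) • w i) 0 :=
    HasDerivAt.fun_sum fun i _ => HasDerivAt.smul_const (hf.comp_of_eq 0
      ((hasDerivAt_mul_const _).const_add 1) (by simp)) _
  have hid : (X * C).trace = ∑ i, hC.eigenvalues i • w i := by
    conv_lhs => rw [← cfc_id' ℝ C]
    exact hC.trace_mul_cfc X id
  convert hsum using 1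
  · ext t
    rw [hC.cfc_one_add_smul, hC.trace_mul_cfc]
  · rw [hid, Finset.smul_sum]
    simp only [smul_smul]

end HermitianCFC

lemma hasDerivAt_div_one_sub_mul_add (l x : ℝ) (hx : (1 - l) * x + l ≠ 0) :
    HasDerivAt (fun y => y / ((1 - l) * y + l)) (l / ((1 - l) * x + l) ^ 2) x :=
  ((hasDerivAt_id' x).div (((hasDerivAt_id' x).const_mul (1 - l)).add_const l) hx).congr_deriv
    (by ring)

lemma half_le_one_sub_mul_add {l x : ℝ} (hl : l ∈ Set.Icc (0 : ℝ) 1)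
    (hx : x ∈ Metric.ball (1 : ℝ) (1 / 2)) : 1 / 2 ≤ (1 - l) * x + l := by
  rw [Metric.mem_ball, Real.dist_eq, abs_sub_lt_iff] at hx
  nlinarith [hl.1, hl.2]

theorem hasDerivAt_fmu_one (μ : Measure ℝ) [IsFiniteMeasure μ]
    (hμ : ∀ᵐ l ∂μ, l ∈ Set.Icc (0 : ℝ) 1) : HasDerivAt (fmu μ) (cmu μ) 1 := by
  have key := hasDerivAt_integral_of_dominated_loc_of_deriv_le (μ := μ)
    (F := fun x l => x / ((1 - l) * x + l)) (F' := fun x l => l / ((1 - l) * x + l) ^ 2)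
    (x₀ := 1) (bound := fun _ => 4) (Metric.ball_mem_nhds _ one_half_pos)
    (.of_forall fun x =>
      (by fun_prop : Measurable fun l : ℝ => x / ((1 - l) * x + l)).aestronglyMeasurable)
    (by simp) (by fun_prop : Measurable _).aestronglyMeasurable ?bound (integrable_const 4) ?deriv
  · show HasDerivAt (fun x => ∫ l, x / ((1 - l) * x + l) ∂μ) (∫ l, l ∂μ) 1
    simpa using key.2
  case bound =>
    filter_upwards [hμ] with l hl x hx
    have hd := half_le_one_sub_mul_add hl hx
    rw [Real.norm_eq_abs, abs_of_nonneg (by have := hl.1; positivity),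
      div_le_iff₀ (by positivity)]
    nlinarith [hl.2]
  case deriv =>
    filter_upwards [hμ] with l hl x hx
    exact hasDerivAt_div_one_sub_mul_add l x
      (one_half_pos.trans_le (half_le_one_sub_mul_add hl hx)).ne'

section MatSqrt

variable {n : ℕ} {A : Matrix (Fin n) (Fin n) ℂ}

lemma isHermitian_matSqrt (A : Matrix (Fin n) (Fin n) ℂ) : (matSqrt A).IsHermitian :=
  (cfc_predicate Real.sqrt A : IsSelfAdjoint _).isHermitian

lemma matSqrt_mul_self (hA : A.PosSemidef) : matSqrt A * matSqrt A = A := by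
  have hsa : IsSelfAdjoint A := hA.isHermitian.isSelfAdjoint
  have hspec : ∀ x ∈ spectrum ℝ A, 0 ≤ x := by
    rw [hA.isHermitian.spectrum_real_eq_range_eigenvalues]
    rintro _ ⟨i, rfl⟩
    exact hA.eigenvalues_nonneg i
  rw [matSqrt, ← cfc_mul Real.sqrt Real.sqrt A (finite_real_spectrum.continuousOn _)
    (finite_real_spectrum.continuousOn _), cfc_congr fun x hx => Real.mul_self_sqrt (hspec x hx),
    cfc_id' ℝ A]

lemma isUnit_det_matSqrt (hA : A.PosDef) : IsUnit (matSqrt A).det := by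
  have h : IsUnit ((matSqrt A).det * (matSqrt A).det) := by
    rw [← det_mul, matSqrt_mul_self hA.posSemidef]
    exact (isUnit_iff_isUnit_det A).mp hA.isUnit
  exact isUnit_of_mul_isUnit_left h

lemma inv_matSqrt_mul_mul_inv_matSqrt (hA : A.PosDef) :
    (matSqrt A)⁻¹ * A * (matSqrt A)⁻¹ = 1 := by
  have hS := isUnit_det_matSqrt hA
  have hSS := matSqrt_mul_self hA.posSemidef
  set S := matSqrt A
  rw [← hSS, ← Matrix.mul_assoc, nonsing_inv_mul _ hS, Matrix.one_mul, mul_nonsing_inv _ hS]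

lemma isHermitian_inv_matSqrt_mul_mul_inv_matSqrt {Y : Matrix (Fin n) (Fin n) ℂ}
    (hY : Y.IsHermitian) : ((matSqrt A)⁻¹ * Y * (matSqrt A)⁻¹).IsHermitian := by
  have h := isHermitian_conjTranspose_mul_mul (matSqrt A)⁻¹ hY
  rwa [(isHermitian_matSqrt A).inv.eq] at h

lemma trace_mul_inv_matSqrt_mul_mul_inv_matSqrt (hA : A.PosDef) (Y : Matrix (Fin n) (Fin n) ℂ) :
    (A * ((matSqrt A)⁻¹ * Y * (matSqrt A)⁻¹)).trace = Y.trace := by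
  rw [← Matrix.mul_assoc, trace_mul_cycle, ← Matrix.mul_assoc, inv_matSqrt_mul_mul_inv_matSqrt hA,
    Matrix.one_mul]

lemma trace_kuboAndo (μ : Measure ℝ) (hA : A.PosSemidef) (B : Matrix (Fin n) (Fin n) ℂ) :
    (kuboAndo μ A B).trace = (A * cfc (fmu μ) ((matSqrt A)⁻¹ * B * (matSqrt A)⁻¹)).trace := by
  rw [kuboAndo, trace_mul_cycle, matSqrt_mul_self hA]

lemma qhd_self_add_smul (μ : Measure ℝ) (hA : A.PosDef) (Y : Matrix (Fin n) (Fin n) ℂ) (t : ℝ) :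
    qhd μ A (A + t • Y) = A.trace.re + t * (cmu μ * Y.trace.re) -
      (A * cfc (fmu μ) (1 + t • ((matSqrt A)⁻¹ * Y * (matSqrt A)⁻¹))).trace.re := by
  rw [qhd, trace_sub, trace_kuboAndo μ hA.posSemidef, Matrix.mul_add, Matrix.add_mul,
    inv_matSqrt_mul_mul_inv_matSqrt hA, Matrix.mul_smul, Matrix.smul_mul]
  simp only [trace_add, trace_smul, Complex.sub_re, Complex.add_re, Complex.real_smul,
    Complex.re_ofReal_mul]
  ring

end MatSqrt

/-- The Fréchet derivative of `X ↦ φ_μ(A,X)` vanishes at `X = A`: for every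
Hermitian direction `Y`, the directional derivative `D(φ_μ(A,·))(A)[Y]` exists and is `0`. -/
theorem qhd_deriv_at_diagonal_eq_zero {n : ℕ} (μ : Measure ℝ) [IsProbabilityMeasure μ]
    (hμ01 : μ (Set.Icc (0 : ℝ) 1) = 1)
    (A : Matrix (Fin n) (Fin n) ℂ) (hA : A.PosDef) :
    ∀ Y : Matrix (Fin n) (Fin n) ℂ, Y.IsHermitian →
      HasDerivAt (fun t : ℝ => qhd μ A (A + t • Y)) 0 0 := by
  intro Y hY
  have hμ : ∀ᵐ l ∂μ, l ∈ Set.Icc (0 : ℝ) 1 := (mem_ae_iff_prob_eq_one measurableSet_Icc).mpr hμ01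
  have hlin : HasDerivAt (fun t : ℝ => A.trace.re + t * (cmu μ * Y.trace.re))
      (cmu μ * Y.trace.re) 0 := by
    simpa using ((hasDerivAt_id' 0).mul_const (cmu μ * Y.trace.re)).const_add A.trace.re
  have hC := isHermitian_inv_matSqrt_mul_mul_inv_matSqrt (A := A) hY
  have hmean := Complex.reCLM.hasFDerivAt.comp_hasDerivAt 0
    (hC.hasDerivAt_trace_mul_cfc_one_add_smul A (hasDerivAt_fmu_one μ hμ))
  rw [funext (qhd_self_add_smul μ hA Y)]
  refine (hlin.sub hmean).congr_deriv ?_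
  simp [trace_mul_inv_matSqrt_mul_mul_inv_matSqrt hA]
end

section
/- Let μ be a Borel probability measure on [0,1] and let T be a linear map from n×n complex matrices to n×n complex matrices that is completely positive and trace preserving (a quantum channel) and maps positive definite matrices to positive definite matrices. Then for all positive definite n×n complex matrices A, B, the data processing inequality φ_μ(T(A), T(B)) ≤ φ_μ(A, B) holds. -/
open MeasureTheory Matrix
open scoped ComplexOrder

/-- The map `T ⊗ id_k` acting on `nk × nk` block matrices: the `(i,j)` block-entry pattern of
the result is obtained by applying `T` slice-wise. -/
noncomputable def tensorId {n : ℕ}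
    (T : Matrix (Fin n) (Fin n) ℂ →ₗ[ℂ] Matrix (Fin n) (Fin n) ℂ) (k : ℕ)
    (M : Matrix (Fin n × Fin k) (Fin n × Fin k) ℂ) :
    Matrix (Fin n × Fin k) (Fin n × Fin k) ℂ :=
  fun p q => T (fun i j => M (i, p.2) (j, q.2)) p.1 q.1

/-- `T` is completely positive: for every `k`, `T ⊗ id_k` maps positive semidefinite matrices
to positive semidefinite matrices. -/
def IsCompletelyPositive {n : ℕ}
    (T : Matrix (Fin n) (Fin n) ℂ →ₗ[ℂ] Matrix (Fin n) (Fin n) ℂ) : Prop :=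
  ∀ (k : ℕ) (M : Matrix (Fin n × Fin k) (Fin n × Fin k) ℂ),
    M.PosSemidef → (tensorId T k M).PosSemidef

/-
With `S = A^{1/2}` and `C = S⁻¹ B S⁻¹`, the weighted harmonic mean
`A !_λ B = ((1-λ)A⁻¹ + λB⁻¹)⁻¹` equals `S g_λ(C) S` for `g_λ(x) = x / ((1-λ)x + λ)`, and
`f_μ = ∫ g_λ dμ(λ)`; hence `Tr(A σ_μ B) = ∫ Tr(A !_λ B) dμ(λ)`.
For `0 < λ < 1`, `A !_λ B` is the parallel sum `A' : B' = (A'⁻¹ + B'⁻¹)⁻¹` of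
`A' = (1-λ)⁻¹A` and `B' = λ⁻¹B`. The block matrix `[[A' - K, -K], [-K, B' - K]]` with
`K = A' : B'` is positive semidefinite, and conversely positivity of
`[[A' - X, -X], [-X, B' - X]]` forces `X ≤ A' : B'`. Applying `T ⊗ id₂` to the first block matrix
therefore gives Ando's inequality `T(A' : B') ≤ T A' : T B'`. Taking traces (`T` preserves them)
and integrating over `λ` yields `Tr(A σ_μ B) ≤ Tr(T A σ_μ T B)`, while the linear part of `φ_μ`
is unchanged by `T`.
-/

open scoped MatrixOrder

lemma one_sub_mul_add_pos {x l : ℝ} (hx : 0 < x) (hl : l ∈ Set.Icc (0 : ℝ) 1) :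
    0 < (1 - l) * x + l := by
  rcases hl.1.eq_or_lt with rfl | hl0
  · simpa using hx
  · nlinarith [hl.2]

lemma integrable_div_one_sub_mul_add {μ : Measure ℝ} [IsFiniteMeasure μ]
    (hμ : ∀ᵐ l ∂μ, l ∈ Set.Icc (0 : ℝ) 1) {x : ℝ} (hx : 0 < x) :
    Integrable (fun l => x / ((1 - l) * x + l)) μ := by
  have hmeas : Measurable fun l : ℝ => x / ((1 - l) * x + l) := by fun_prop
  refine (integrable_const (max x 1)).mono' hmeas.aestronglyMeasurable ?_
  filter_upwards [hμ] with l hl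
  rw [Real.norm_of_nonneg (div_nonneg hx.le (one_sub_mul_add_pos hx hl).le),
    div_le_iff₀ (one_sub_mul_add_pos hx hl)]
  have h1 : 0 ≤ (1 - l) * x * (max x 1 - 1) :=
    mul_nonneg (mul_nonneg (by linarith [hl.2]) hx.le) (by linarith [le_max_right x 1])
  have h2 : 0 ≤ l * (max x 1 - x) := mul_nonneg hl.1 (by linarith [le_max_left x 1])
  nlinarith

section BlockMatrix

variable {m ι α : Type*} [Fintype m]

-- Rows and columns are indexed by (entry, block), the convention of `tensorId`.
def blockMatrix (M : Matrix ι ι (Matrix m m α)) : Matrix (m × ι) (m × ι) α :=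
  of fun p q => M p.2 q.2 p.1 q.1

def blockColumn (Z : ι → Matrix m m α) : Matrix (m × ι) m α :=
  of fun p j => Z p.2 p.1 j

variable [Semiring α]

lemma blockMatrix_mul_blockColumn [Fintype ι] (M : Matrix ι ι (Matrix m m α))
    (Z : ι → Matrix m m α) :
    blockMatrix M * blockColumn Z = blockColumn fun s => ∑ t, M s t * Z t := by
  ext ⟨a, s⟩ j
  simp [blockColumn, blockMatrix, mul_apply, Matrix.sum_apply, Fintype.sum_prod_type_right]

variable [StarRing α]

lemma blockColumn_mul_mul_conjTranspose_blockColumn (X : ι → Matrix m m α) (P : Matrix m m α) :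
    blockColumn X * P * (blockColumn X)ᴴ = blockMatrix (of fun s t => X s * P * (X t)ᴴ) := by
  ext ⟨i, s⟩ ⟨j, t⟩
  simp [blockColumn, blockMatrix, mul_apply]

variable [Fintype ι]

lemma conjTranspose_blockColumn_mul_blockColumn (Y Z : ι → Matrix m m α) :
    (blockColumn Y)ᴴ * blockColumn Z = ∑ s, (Y s)ᴴ * Z s := by
  ext i j
  simp [blockColumn, mul_apply, Matrix.sum_apply, Fintype.sum_prod_type_right]

lemma conjTranspose_blockColumn_mul_blockMatrix_mul_blockColumn (Z : ι → Matrix m m α)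
    (M : Matrix ι ι (Matrix m m α)) :
    (blockColumn Z)ᴴ * blockMatrix M * blockColumn Z = ∑ s, ∑ t, (Z s)ᴴ * M s t * Z t := by
  simp only [Matrix.mul_assoc, blockMatrix_mul_blockColumn,
    conjTranspose_blockColumn_mul_blockColumn, Finset.mul_sum]

end BlockMatrix

section ParallelSum

variable {m R : Type*} [Fintype m] [DecidableEq m] [CommRing R]

noncomputable def parallelSum (A B : Matrix m m R) : Matrix m m R := (A⁻¹ + B⁻¹)⁻¹

lemma parallelSum_comm (A B : Matrix m m R) : parallelSum A B = parallelSum B A := by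
  rw [parallelSum, parallelSum, add_comm]

lemma mul_add_inv_mul_eq_parallelSum {A B : Matrix m m R} (hA : IsUnit A) (hB : IsUnit B)
    (hAB : IsUnit (A + B)) : A * (A + B)⁻¹ * B = parallelSum A B := by
  refine (inv_eq_right_inv ?_).symm
  calc (A⁻¹ + B⁻¹) * (A * (A + B)⁻¹ * B) = B⁻¹ * ((B + A) * (A + B)⁻¹) * B := by
        simp only [add_mul, mul_add, Matrix.mul_assoc,
          nonsing_inv_mul_cancel_left _ _ ((isUnit_iff_isUnit_det _).mp hA),
          nonsing_inv_mul_cancel_left _ _ ((isUnit_iff_isUnit_det _).mp hB)]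
    _ = 1 := by
        rw [add_comm, mul_nonsing_inv _ ((isUnit_iff_isUnit_det _).mp hAB), Matrix.mul_one,
          nonsing_inv_mul _ ((isUnit_iff_isUnit_det _).mp hB)]

lemma mul_add_inv_mul_self_eq {A B : Matrix m m R} (hA : IsUnit A) (hB : IsUnit B)
    (hAB : IsUnit (A + B)) : A * (A + B)⁻¹ * A = A - parallelSum A B := by
  rw [← mul_add_inv_mul_eq_parallelSum hA hB hAB, eq_sub_iff_add_eq, ← Matrix.mul_add,
    Matrix.mul_assoc, nonsing_inv_mul _ ((isUnit_iff_isUnit_det _).mp hAB), Matrix.mul_one]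

end ParallelSum

section ParallelSumOrder

variable {m : Type*} [Fintype m] [DecidableEq m]

lemma posSemidef_blockMatrix_parallelSum {A B : Matrix m m ℂ} (hA : A.PosDef) (hB : B.PosDef) :
    (blockMatrix !![A - parallelSum A B, -parallelSum A B;
      -parallelSum A B, B - parallelSum A B]).PosSemidef := by
  have hAB := hA.add hB
  have hBA := hB.add hA
  have hAA := mul_add_inv_mul_self_eq hA.isUnit hB.isUnit hAB.isUnit
  have hBB := mul_add_inv_mul_self_eq hB.isUnit hA.isUnit hBA.isUnit
  have hAB' := mul_add_inv_mul_eq_parallelSum hA.isUnit hB.isUnit hAB.isUnit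
  have hBA' := mul_add_inv_mul_eq_parallelSum hB.isUnit hA.isUnit hBA.isUnit
  rw [add_comm B A, parallelSum_comm B A] at hBB hBA'
  have h : (blockMatrix (of fun s t => ![A, -B] s * (A + B)⁻¹ * (![A, -B] t)ᴴ)).PosSemidef := by
    rw [← blockColumn_mul_mul_conjTranspose_blockColumn]
    exact hAB.inv.posSemidef.mul_mul_conjTranspose_same _
  convert h using 2
  refine Matrix.ext fun s t => ?_
  fin_cases s <;> fin_cases t <;> simp [hA.1.eq, hB.1.eq, hAA, hBB, hAB', hBA']

lemma le_parallelSum_of_posSemidef_blockMatrix {A B X : Matrix m m ℂ} (hA : A.PosDef)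
    (hB : B.PosDef) (h : (blockMatrix !![A - X, -X; -X, B - X]).PosSemidef) :
    X ≤ parallelSum A B := by
  set K := parallelSum A B
  have hQ : (A⁻¹ + B⁻¹).PosDef := hA.inv.add hB.inv
  have hK : K.PosDef := hQ.inv
  have hQK : (A⁻¹ + B⁻¹) * K = 1 := mul_nonsing_inv _ ((isUnit_iff_isUnit_det _).mp hQ.isUnit)
  have hKQ : K * (A⁻¹ + B⁻¹) = 1 := nonsing_inv_mul _ ((isUnit_iff_isUnit_det _).mp hQ.isUnit)
  have hAA : A⁻¹ * A = 1 := nonsing_inv_mul _ ((isUnit_iff_isUnit_det _).mp hA.isUnit)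
  have hBB : B⁻¹ * B = 1 := nonsing_inv_mul _ ((isUnit_iff_isUnit_det _).mp hB.isUnit)
  -- The compression `Z = (A⁻¹K, B⁻¹K)` has `Z₀ + Z₁ = 1` and `Z₀ᴴ A Z₀ + Z₁ᴴ B Z₁ = K`.
  have hc := h.conjTranspose_mul_mul_same (blockColumn ![A⁻¹ * K, B⁻¹ * K])
  rw [conjTranspose_blockColumn_mul_blockMatrix_mul_blockColumn] at hc
  show (K - X).PosSemidef
  convert hc using 1
  simp only [Fin.sum_univ_two, Matrix.cons_val_zero, Matrix.cons_val_one, of_apply,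
    conjTranspose_mul, hK.1.eq, hA.1.inv.eq, hB.1.inv.eq]
  calc K - X = K * (A⁻¹ * A) * A⁻¹ * K + K * (B⁻¹ * B) * B⁻¹ * K
        - K * (A⁻¹ + B⁻¹) * X * ((A⁻¹ + B⁻¹) * K) := by
        simp only [hAA, hBB, hKQ, hQK, Matrix.mul_one, Matrix.one_mul]
        rw [← Matrix.add_mul, ← Matrix.mul_add, hKQ, Matrix.one_mul]
    _ = _ := by noncomm_ring

end ParallelSumOrder

lemma tensorId_blockMatrix {n k : ℕ} (T : Matrix (Fin n) (Fin n) ℂ →ₗ[ℂ] Matrix (Fin n) (Fin n) ℂ)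
    (M : Matrix (Fin k) (Fin k) (Matrix (Fin n) (Fin n) ℂ)) :
    tensorId T k (blockMatrix M) = blockMatrix (M.map T) :=
  rfl

theorem IsCompletelyPositive.map_parallelSum_le {n : ℕ}
    {T : Matrix (Fin n) (Fin n) ℂ →ₗ[ℂ] Matrix (Fin n) (Fin n) ℂ} (hT : IsCompletelyPositive T)
    {A B : Matrix (Fin n) (Fin n) ℂ} (hA : A.PosDef) (hB : B.PosDef) (hTA : (T A).PosDef)
    (hTB : (T B).PosDef) :
    T (parallelSum A B) ≤ parallelSum (T A) (T B) := by
  refine le_parallelSum_of_posSemidef_blockMatrix hTA hTB ?_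
  have h := hT 2 _ (posSemidef_blockMatrix_parallelSum hA hB)
  rw [tensorId_blockMatrix] at h
  convert h using 2
  refine Matrix.ext fun s t => ?_
  fin_cases s <;> fin_cases t <;> simp

section WeightedHarmonicMean

variable {m : Type*} [Fintype m] [DecidableEq m]

noncomputable def weightedHarmonicMean (l : ℝ) (A B : Matrix m m ℂ) : Matrix m m ℂ :=
  ((1 - l) • A⁻¹ + l • B⁻¹)⁻¹

lemma inv_real_smul {c : ℝ} (hc : c ≠ 0) {A : Matrix m m ℂ} (hA : IsUnit A) :
    (c • A)⁻¹ = c⁻¹ • A⁻¹ :=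
  inv_eq_left_inv <| by
    rw [smul_mul_smul_comm, inv_mul_cancel₀ hc,
      nonsing_inv_mul _ ((isUnit_iff_isUnit_det _).mp hA), one_smul]

lemma weightedHarmonicMean_zero {A : Matrix m m ℂ} (hA : IsUnit A) (B : Matrix m m ℂ) :
    weightedHarmonicMean 0 A B = A := by
  simp [weightedHarmonicMean, nonsing_inv_nonsing_inv _ ((isUnit_iff_isUnit_det _).mp hA)]

lemma weightedHarmonicMean_one (A : Matrix m m ℂ) {B : Matrix m m ℂ} (hB : IsUnit B) :
    weightedHarmonicMean 1 A B = B := by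
  simp [weightedHarmonicMean, nonsing_inv_nonsing_inv _ ((isUnit_iff_isUnit_det _).mp hB)]

lemma weightedHarmonicMean_eq_parallelSum {A B : Matrix m m ℂ} (hA : IsUnit A) (hB : IsUnit B)
    {l : ℝ} (hl0 : l ≠ 0) (hl1 : l ≠ 1) :
    weightedHarmonicMean l A B = parallelSum ((1 - l)⁻¹ • A) (l⁻¹ • B) := by
  rw [weightedHarmonicMean, parallelSum,
    inv_real_smul (inv_ne_zero (sub_ne_zero.mpr hl1.symm)) hA, inv_real_smul (inv_ne_zero hl0) hB,
    inv_inv, inv_inv]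

lemma weightedHarmonicMean_mul_self_conj {S C : Matrix m m ℂ} (hS : IsUnit S) (hC : C.PosDef)
    {l : ℝ} (hl : l ∈ Set.Icc (0 : ℝ) 1) :
    weightedHarmonicMean l (S * S) (S * C * S) =
      S * cfc (fun x => x / ((1 - l) * x + l)) C * S := by
  have hcont (f : ℝ → ℝ) : ContinuousOn f (spectrum ℝ C) := C.finite_real_spectrum.continuousOn f
  have hSdet : IsUnit S.det := (isUnit_iff_isUnit_det S).mp hS
  have hCinv : C⁻¹ = cfc (fun x : ℝ => x⁻¹) C := by
    rw [cfc_ringInverse_id (R := ℝ) (a := C) hC.isUnit, nonsing_inv_eq_ringInverse]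
  have hsum : (1 - l) • (S * S)⁻¹ + l • (S * C * S)⁻¹ =
      S⁻¹ * cfc (fun x => (1 - l) + l * x⁻¹) C * S⁻¹ := by
    rw [cfc_add C _ _ (hcont _) (hcont _), cfc_const_mul _ _ C (hcont _), cfc_const _ C, ← hCinv,
      Matrix.mul_inv_rev, Matrix.mul_inv_rev, Matrix.mul_inv_rev]
    simp only [Algebra.algebraMap_eq_smul_one, mul_add, add_mul, smul_mul_assoc, mul_smul_comm,
      mul_one, mul_assoc]
  rw [weightedHarmonicMean, hsum]
  refine inv_eq_right_inv ?_
  calc S⁻¹ * cfc (fun x => (1 - l) + l * x⁻¹) C * S⁻¹ *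
        (S * cfc (fun x => x / ((1 - l) * x + l)) C * S)
      = S⁻¹ * cfc (fun x => ((1 - l) + l * x⁻¹) * (x / ((1 - l) * x + l))) C * S := by
        rw [cfc_mul _ _ C (hcont _) (hcont _)]
        simp only [mul_assoc, nonsing_inv_mul_cancel_left _ _ hSdet]
    _ = S⁻¹ * cfc (fun _ => (1 : ℝ)) C * S := by
        congr 2
        refine cfc_congr fun x hx => ?_
        have hx0 := hC.isStrictlyPositive.spectrum_pos hx
        have := one_sub_mul_add_pos hx0 hl
        field_simp
    _ = 1 := by rw [cfc_const_one ℝ C, mul_one, nonsing_inv_mul _ hSdet]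

end WeightedHarmonicMean

theorem IsCompletelyPositive.map_weightedHarmonicMean_le {n : ℕ}
    {T : Matrix (Fin n) (Fin n) ℂ →ₗ[ℂ] Matrix (Fin n) (Fin n) ℂ} (hT : IsCompletelyPositive T)
    {A B : Matrix (Fin n) (Fin n) ℂ} (hA : A.PosDef) (hB : B.PosDef) (hTA : (T A).PosDef)
    (hTB : (T B).PosDef) {l : ℝ} (hl : l ∈ Set.Icc (0 : ℝ) 1) :
    T (weightedHarmonicMean l A B) ≤ weightedHarmonicMean l (T A) (T B) := by
  rcases eq_or_ne l 0 with rfl | hl0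
  · rw [weightedHarmonicMean_zero hA.isUnit, weightedHarmonicMean_zero hTA.isUnit]
  rcases eq_or_ne l 1 with rfl | hl1
  · rw [weightedHarmonicMean_one _ hB.isUnit, weightedHarmonicMean_one _ hTB.isUnit]
  have hc₁ : 0 < (1 - l)⁻¹ := inv_pos.mpr (sub_pos.mpr (lt_of_le_of_ne hl.2 hl1))
  have hc₂ : 0 < l⁻¹ := inv_pos.mpr (lt_of_le_of_ne hl.1 hl0.symm)
  rw [weightedHarmonicMean_eq_parallelSum hA.isUnit hB.isUnit hl0 hl1,
    weightedHarmonicMean_eq_parallelSum hTA.isUnit hTB.isUnit hl0 hl1]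
  simpa only [LinearMap.map_smul_of_tower] using hT.map_parallelSum_le (hA.smul hc₁)
    (hB.smul hc₂) (by simpa using hTA.smul hc₁) (by simpa using hTB.smul hc₂)

lemma exists_re_trace_mul_cfc_eq_sum {m : Type*} [Fintype m] [DecidableEq m] (A : Matrix m m ℂ)
    {C : Matrix m m ℂ} (hC : C.IsHermitian) :
    ∃ w : m → ℝ, ∀ f : ℝ → ℝ, (A * cfc f C).trace.re = ∑ i, f (hC.eigenvalues i) * w i := by
  set U : Matrix m m ℂ := ↑hC.eigenvectorUnitary
  refine ⟨fun i => ((Uᴴ * A * U) i i).re, fun f => ?_⟩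
  set D : Matrix m m ℂ := diagonal (RCLike.ofReal ∘ f ∘ hC.eigenvalues)
  have hcyc : (A * (U * D * Uᴴ)).trace = (Uᴴ * A * U * D).trace := by
    rw [← mul_assoc, ← mul_assoc, trace_mul_comm]
    simp only [mul_assoc]
  rw [hC.cfc_eq, IsHermitian.cfc, Unitary.conjStarAlgAut_apply, star_eq_conjTranspose, hcyc]
  simp [trace, Complex.re_sum, D, mul_comm]

lemma matSqrt_eq_sqrt {n : ℕ} {A : Matrix (Fin n) (Fin n) ℂ} (hA : A.PosSemidef) :
    matSqrt A = CFC.sqrt A := by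
  rw [matSqrt, CFC.sqrt_eq_real_sqrt A hA.nonneg, cfcₙ_eq_cfc]

lemma exists_re_trace_weightedHarmonicMean_and_kuboAndo_eq_sum {n : ℕ} (μ : Measure ℝ)
    {A B : Matrix (Fin n) (Fin n) ℂ} (hA : A.PosDef) (hB : B.PosDef) :
    ∃ d w : Fin n → ℝ, (∀ i, 0 < d i) ∧
      (∀ l ∈ Set.Icc (0 : ℝ) 1,
        (weightedHarmonicMean l A B).trace.re = ∑ i, d i / ((1 - l) * d i + l) * w i) ∧
      (kuboAndo μ A B).trace.re = ∑ i, fmu μ (d i) * w i := by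
  set S := CFC.sqrt A
  have hS : S.PosDef := hA.isStrictlyPositive.sqrt.posDef
  have hSdet : IsUnit S.det := (isUnit_iff_isUnit_det S).mp hS.isUnit
  have hSS : S * S = A := CFC.sqrt_mul_sqrt_self A hA.posSemidef.nonneg
  set C := S⁻¹ * B * S⁻¹
  have hSCS : S * C * S = B := by
    simp only [C, Matrix.mul_assoc, mul_nonsing_inv_cancel_left _ _ hSdet, nonsing_inv_mul _ hSdet,
      Matrix.mul_one]
  have hC : C.PosDef := by
    have h := hB.conjTranspose_mul_mul_same (mulVec_injective_iff_isUnit.mpr hS.inv.isUnit)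
    rwa [hS.inv.1.eq] at h
  have htr (f : ℝ → ℝ) : (S * cfc f C * S).trace = (A * cfc f C).trace := by
    rw [trace_mul_cycle, hSS]
  obtain ⟨w, hw⟩ := exists_re_trace_mul_cfc_eq_sum A hC.1
  refine ⟨hC.1.eigenvalues, w, hC.eigenvalues_pos, fun l hl => ?_, ?_⟩
  · rw [← hSS, ← hSCS, weightedHarmonicMean_mul_self_conj hS.isUnit hC hl, htr, hw]
  · rw [kuboAndo, matSqrt_eq_sqrt hA.posSemidef, htr, hw]

theorem integrable_and_re_trace_kuboAndo_eq_integral {n : ℕ} {μ : Measure ℝ} [IsFiniteMeasure μ]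
    (hμ : ∀ᵐ l ∂μ, l ∈ Set.Icc (0 : ℝ) 1) {A B : Matrix (Fin n) (Fin n) ℂ} (hA : A.PosDef)
    (hB : B.PosDef) :
    Integrable (fun l => (weightedHarmonicMean l A B).trace.re) μ ∧
      (kuboAndo μ A B).trace.re = ∫ l, (weightedHarmonicMean l A B).trace.re ∂μ := by
  obtain ⟨d, w, hd, hmean, hkubo⟩ :=
    exists_re_trace_weightedHarmonicMean_and_kuboAndo_eq_sum μ hA hB
  have hae : (fun l => (weightedHarmonicMean l A B).trace.re) =ᵐ[μ]
      fun l => ∑ i, d i / ((1 - l) * d i + l) * w i := by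
    filter_upwards [hμ] with l hl using hmean l hl
  have hint (i : Fin n) : Integrable (fun l => d i / ((1 - l) * d i + l) * w i) μ :=
    (integrable_div_one_sub_mul_add hμ (hd i)).mul_const (w i)
  refine ⟨(integrable_finsetSum _ fun i _ => hint i).congr hae.symm, ?_⟩
  rw [integral_congr_ae hae, integral_finsetSum _ fun i _ => hint i, hkubo]
  simp only [integral_mul_const, fmu]

lemma re_trace_le_re_trace_of_le {m : Type*} [Fintype m] {X Y : Matrix m m ℂ} (h : X ≤ Y) :
    X.trace.re ≤ Y.trace.re := by
  have := (Complex.nonneg_iff.mp (Matrix.le_iff.mp h).trace_nonneg).1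
  rwa [trace_sub, Complex.sub_re, sub_nonneg] at this

lemma qhd_eq {n : ℕ} (μ : Measure ℝ) (A B : Matrix (Fin n) (Fin n) ℂ) :
    qhd μ A B = (1 - cmu μ) * A.trace.re + cmu μ * B.trace.re - (kuboAndo μ A B).trace.re := by
  simp [qhd, trace_sub, trace_add, trace_smul]

/-- **data processing inequality.** If `T` is a quantum channel (completely
positive, trace preserving) mapping positive definite matrices to positive definite matrices,
then `φ_μ(T(A), T(B)) ≤ φ_μ(A, B)` for all positive definite `A, B`. -/
theorem qhd_data_processing {n : ℕ} (μ : Measure ℝ) [IsProbabilityMeasure μ]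
    (hμ01 : μ (Set.Icc (0 : ℝ) 1) = 1)
    (T : Matrix (Fin n) (Fin n) ℂ →ₗ[ℂ] Matrix (Fin n) (Fin n) ℂ)
    (hCP : IsCompletelyPositive T)
    (hTP : ∀ X : Matrix (Fin n) (Fin n) ℂ, (T X).trace = X.trace)
    (hPD : ∀ X : Matrix (Fin n) (Fin n) ℂ, X.PosDef → (T X).PosDef)
    (A B : Matrix (Fin n) (Fin n) ℂ) (hA : A.PosDef) (hB : B.PosDef) :
    qhd μ (T A) (T B) ≤ qhd μ A B := by
  have hμ : ∀ᵐ l ∂μ, l ∈ Set.Icc (0 : ℝ) 1 :=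
    (ae_mem_iff_measure_eq measurableSet_Icc.nullMeasurableSet).mpr (by rw [hμ01, measure_univ])
  obtain ⟨hint, hkubo⟩ := integrable_and_re_trace_kuboAndo_eq_integral hμ hA hB
  obtain ⟨hint', hkubo'⟩ :=
    integrable_and_re_trace_kuboAndo_eq_integral hμ (hPD A hA) (hPD B hB)
  have hmono : (kuboAndo μ A B).trace.re ≤ (kuboAndo μ (T A) (T B)).trace.re := by
    rw [hkubo, hkubo']
    refine integral_mono_ae hint hint' ?_
    filter_upwards [hμ] with l hl
    rw [← hTP]
    exact re_trace_le_re_trace_of_le (hCP.map_weightedHarmonicMean_le hA hB (hPD A hA) (hPD B hB) hl)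
  rw [qhd_eq, qhd_eq, hTP, hTP]
  linarith
end
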